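/- Let h : ℝ → ℝ be nondecreasing, let v > 0 and b ≤ b' be real numbers, and suppose h is integrable with respect to both Gaussian measures N(b, v) and N(b', v). Then W_1(h_#N(b, v), h_#N(b', v)) = ∫ h dN(b', v) − ∫ h dN(b, v); i.e. the 1-Wasserstein distance between the pushforwards equals the difference of their means. (This is the content of the assertion that the Bass MVM ξ^h_t = h_#N(B_t, 1−t) is Lipschitz-Markov.) -/

import Mathlib

open MeasureTheory ProbabilityTheory Filter Topology NNReal ENNReal

noncomputable section

def Couplings {E : Type*} [MeasurableSpace E] (lam mu : Measure E) : Set (Measure (E × E)) :=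
  {ν | IsProbabilityMeasure ν ∧ ν.map Prod.fst = lam ∧ ν.map Prod.snd = mu}

def Wpp {E : Type*} [NormedAddCommGroup E] [MeasurableSpace E] (p : ℝ)
    (lam mu : Measure E) : ℝ≥0∞ :=
  ⨅ ν ∈ Couplings lam mu, ∫⁻ z, (‖z.1 - z.2‖₊ : ℝ≥0∞) ^ p ∂ν

/-- For a nondecreasing `h` integrable against both Gaussians, the 1-Wasserstein distance
between `h_#N(b,v)` and `h_#N(b',v)` (with `b ≤ b'`) equals the difference of their means:
the Bass MVM is Lipschitz-Markov. -/
theorem stmt9 (h : ℝ → ℝ) (hmono : Monotone h) (v : ℝ≥0) (hv : 0 < v)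
    (b b' : ℝ) (hbb : b ≤ b')
    (hint : Integrable h (gaussianReal b v)) (hint' : Integrable h (gaussianReal b' v)) :
    Wpp 1 ((gaussianReal b v).map h) ((gaussianReal b' v).map h)
      = ENNReal.ofReal ((∫ x, h x ∂gaussianReal b' v) - ∫ x, h x ∂gaussianReal b v) := by
  have hmeas : Measurable h := hmono.measurable
  set μ := gaussianReal b v with hμ
  set μ' := gaussianReal b' v with hμ'
  set c := b' - b with hc
  have hc0 : 0 ≤ c := sub_nonneg.mpr hbb
  set I : ℝ := ∫ x, h x ∂μ with hI
  set I' : ℝ := ∫ x, h x ∂μ' with hI'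
  have hmap : μ.map (· + c) = μ' := by
    rw [hμ, gaussianReal_map_add_const]
    congr 1
    ring
  -- integrability of translated h
  have hint2 : Integrable (fun x => h (x + c)) μ := by
    have h1 : Integrable h (μ.map (· + c)) := hmap ▸ hint'
    exact (integrable_map_measure hmeas.aestronglyMeasurable
      (measurable_add_const c).aemeasurable).mp h1
  have hI'eq : I' = ∫ x, h (x + c) ∂μ := by
    rw [hI', ← hmap, integral_map (measurable_add_const c).aemeasurable
      hmeas.aestronglyMeasurable]
  -- the explicit coupling
  set g : ℝ → ℝ × ℝ := fun x => (h x, h (x + c)) with hg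
  have hgmeas : Measurable g := hmeas.prodMk (hmeas.comp (measurable_add_const c))
  set ν₀ : Measure (ℝ × ℝ) := μ.map g with hν₀
  have hmem : ν₀ ∈ Couplings (μ.map h) (μ'.map h) := by
    refine ⟨Measure.isProbabilityMeasure_map hgmeas.aemeasurable, ?_, ?_⟩
    · rw [hν₀, Measure.map_map measurable_fst hgmeas]
      rfl
    · rw [hν₀, Measure.map_map measurable_snd hgmeas, ← hmap,
        Measure.map_map hmeas (measurable_add_const c)]
      rfl
  -- cost of the explicit coupling
  have hcost : ∫⁻ z, (‖z.1 - z.2‖₊ : ℝ≥0∞) ^ (1 : ℝ) ∂ν₀ = ENNReal.ofReal (I' - I) := by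
    have hFmeas : Measurable (fun z : ℝ × ℝ => (‖z.1 - z.2‖₊ : ℝ≥0∞) ^ (1 : ℝ)) :=
      ((measurable_fst.sub measurable_snd).nnnorm.coe_nnreal_ennreal).pow_const _
    rw [hν₀, lintegral_map hFmeas hgmeas]
    have hptwise : ∀ x, (‖(g x).1 - (g x).2‖₊ : ℝ≥0∞) ^ (1 : ℝ)
        = ENNReal.ofReal (h (x + c) - h x) := by
      intro x
      rw [ENNReal.rpow_one, ← enorm_eq_nnnorm, ← ofReal_norm]
      congr 1
      rw [Real.norm_eq_abs, abs_sub_comm, abs_of_nonneg]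
      exact sub_nonneg.mpr (hmono (le_add_of_nonneg_right hc0))
    simp_rw [hptwise]
    have heq : ENNReal.ofReal (∫ x, (h (x + c) - h x) ∂μ)
        = ∫⁻ x, ENNReal.ofReal (h (x + c) - h x) ∂μ :=
      ofReal_integral_eq_lintegral_ofReal (hint2.sub hint)
        (ae_of_all _ fun x => sub_nonneg.mpr (hmono (le_add_of_nonneg_right hc0)))
    rw [← heq, integral_sub hint2 hint, ← hI'eq]
  refine le_antisymm ?_ ?_
  · exact iInf₂_le_of_le ν₀ hmem (le_of_eq hcost)
  · -- lower bound for every coupling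
    refine le_iInf₂ fun ν hν => ?_
    obtain ⟨hνprob, hν1, hν2⟩ := hν
    -- integrability of coordinates
    have hid1 : Integrable id (μ.map h) :=
      (integrable_map_measure aestronglyMeasurable_id hmeas.aemeasurable).mpr hint
    have hid2 : Integrable id (μ'.map h) :=
      (integrable_map_measure aestronglyMeasurable_id hmeas.aemeasurable).mpr hint'
    have hi1 : Integrable (fun z : ℝ × ℝ => z.1) ν := by
      have := (integrable_map_measure aestronglyMeasurable_id
        measurable_fst.aemeasurable).mp (hν1 ▸ hid1)
      exact this
    have hi2 : Integrable (fun z : ℝ × ℝ => z.2) ν := by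
      have := (integrable_map_measure aestronglyMeasurable_id
        measurable_snd.aemeasurable).mp (hν2 ▸ hid2)
      exact this
    have hI1 : ∫ z : ℝ × ℝ, z.1 ∂ν = I := by
      have h1 : ∫ x, id x ∂(ν.map Prod.fst) = ∫ z : ℝ × ℝ, z.1 ∂ν :=
        integral_map measurable_fst.aemeasurable aestronglyMeasurable_id
      rw [← h1, hν1, integral_map hmeas.aemeasurable aestronglyMeasurable_id]
      rfl
    have hI2 : ∫ z : ℝ × ℝ, z.2 ∂ν = I' := by
      have h1 : ∫ x, id x ∂(ν.map Prod.snd) = ∫ z : ℝ × ℝ, z.2 ∂ν :=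
        integral_map measurable_snd.aemeasurable aestronglyMeasurable_id
      rw [← h1, hν2, integral_map hmeas.aemeasurable aestronglyMeasurable_id]
      rfl
    have hdiff : I' - I = ∫ z : ℝ × ℝ, (z.2 - z.1) ∂ν := by
      rw [integral_sub hi2 hi1, hI1, hI2]
    have hle : I' - I ≤ ∫ z : ℝ × ℝ, |z.2 - z.1| ∂ν := by
      rw [hdiff]
      exact integral_mono (hi2.sub hi1) (hi2.sub hi1).abs fun z => le_abs_self _
    calc ENNReal.ofReal (I' - I) ≤ ENNReal.ofReal (∫ z : ℝ × ℝ, |z.2 - z.1| ∂ν) :=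
          ENNReal.ofReal_le_ofReal hle
      _ = ∫⁻ z : ℝ × ℝ, ENNReal.ofReal |z.2 - z.1| ∂ν :=
          ofReal_integral_eq_lintegral_ofReal (hi2.sub hi1).abs
            (ae_of_all _ fun z => abs_nonneg _)
      _ = ∫⁻ z : ℝ × ℝ, (‖z.1 - z.2‖₊ : ℝ≥0∞) ^ (1 : ℝ) ∂ν := by
          refine lintegral_congr fun z => ?_
          rw [ENNReal.rpow_one, ← enorm_eq_nnnorm, ← ofReal_norm, Real.norm_eq_abs, abs_sub_comm]
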